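/- If a term t = (H M₁ ... Mₙ) with H a variable or abstraction is such that H and all Mᵢ are SN, and t is not head-reducible by any of δ, γ, β and no Mᵢ is a β-redex, then t is SN for the union of β, δ, γ, assoc. In particular, (x M₁ ... Mₙ) is SN whenever all Mᵢ are SN and no Mᵢ is a β-redex. -/
import Mathlib


/-- Untyped λ-terms in de Bruijn representation. -/
inductive Term : Type
  | var : ℕ → Term
  | lam : Term → Term
  | app : Term → Term → Term
  deriving DecidableEq

namespace Term

/-- Shift (lift) all de Bruijn indices ≥ d by one. -/
def lift (d : ℕ) : Term → Term
  | var n => var (if n < d then n else n + 1)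
  | lam t => lam (lift (d + 1) t)
  | app t u => app (lift d t) (lift d u)

/-- Capture-avoiding substitution `t[k := u]` (de Bruijn style). -/
def subst : Term → ℕ → Term → Term
  | var n, k, u => if n = k then u else var (if n < k then n else n - 1)
  | lam t, k, u => lam (subst t (k + 1) (lift 0 u))
  | app t v, k, u => app (subst t k u) (subst v k u)

/-- Swap the de Bruijn indices d and d+1 (exchange of two adjacent binders). -/
def swap (d : ℕ) : Term → Term
  | var n => var (if n = d then d + 1 else if n = d + 1 then d else n)
  | lam t => lam (swap (d + 1) t)
  | app t u => app (swap d t) (swap d u)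

end Term

/-- The four reduction rules. -/
inductive Rule | beta | delta | gamma | assoc

/-- One-step reduction by a given rule (closed under congruence).
β: (λx.M N) ▷ M[x:=N];
δ: (λy.λx.M N) ▷ λx.(λy.M N), x ∉ FV(N);
γ: (λx.M N P) ▷ (λx.(M P) N), x ∉ FV(P);
assoc: (M (λx.N P)) ▷ (λx.(M N) P), x ∉ FV(M).
Freshness conditions are realized by lifting. -/
inductive Step : Rule → Term → Term → Prop
  | beta (M N) : Step .beta (.app (.lam M) N) (Term.subst M 0 N)
  | delta (M N) : Step .delta (.app (.lam (.lam M)) N)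
      (.lam (.app (.lam (Term.swap 0 M)) (Term.lift 0 N)))
  | gamma (M N P) : Step .gamma (.app (.app (.lam M) N) P)
      (.app (.lam (.app M (Term.lift 0 P))) N)
  | assoc (M N P) : Step .assoc (.app M (.app (.lam N) P))
      (.app (.lam (.app (Term.lift 0 M) N)) P)
  | appCongL {r t t'} (u) : Step r t t' → Step r (.app t u) (.app t' u)
  | appCongR {r u u'} (t) : Step r u u' → Step r (.app t u) (.app t u')
  | lamCong {r t t'} : Step r t t' → Step r (.lam t) (.lam t')

/-- One-step reduction by the union of the four rules. -/
def StepAll (t t' : Term) : Prop := ∃ r, Step r t t'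

/-- Strong normalization for the union of β, δ, γ, assoc. -/
def SN (t : Term) : Prop := Acc (fun a b => StepAll b a) t

/-- Strong normalization for β alone. -/
def SNbeta (t : Term) : Prop := Acc (fun a b => Step .beta b a) t

mutual
/-- Simple types: atoms and arrows with simple codomain. -/
inductive STy : Type
  | atom : ℕ → STy
  | arrow : Ty → STy → STy
/-- Types of system D: intersections of simple types. -/
inductive Ty : Type
  | simple : STy → Ty
  | inter : STy → Ty → Ty
end

/-- Typing judgment of system D (contexts are lists of types, de Bruijn). -/
inductive Typing : List Ty → Term → Ty → Prop
  | var {Γ n A} : Γ[n]? = some A → Typing Γ (.var n) A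
  | app {Γ M N A B} : Typing Γ M (.simple (.arrow A B)) → Typing Γ N A →
      Typing Γ (.app M N) (.simple B)
  | lam {Γ M A B} : Typing (A :: Γ) M (.simple B) →
      Typing Γ (.lam M) (.simple (.arrow A B))
  | interI {Γ M A B} : Typing Γ M (.simple A) → Typing Γ M B →
      Typing Γ M (.inter A B)
  | interE1 {Γ M A B} : Typing Γ M (.inter A B) → Typing Γ M (.simple A)
  | interE2 {Γ M A B} : Typing Γ M (.inter A B) → Typing Γ M B

/-- A term is typable in system D. -/
def Typable (t : Term) : Prop := ∃ Γ A, Typing Γ t A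

/-- (H M₁ ... Mₙ). -/
def appList (H : Term) (Ms : List Term) : Term := Ms.foldl .app H

namespace Term

theorem lift_lift (t : Term) : ∀ c d, c ≤ d →
    lift c (lift d t) = lift (d+1) (lift c t) := by
  induction t with
  | var n => intro c d h; simp only [lift]; split_ifs <;> simp_all [lift] <;> (try split_ifs) <;> first | rfl | omega | (exfalso; omega)
  | lam t ih => intro c d h; simp only [lift]; rw [ih _ _ (by omega)]
  | app t u iht ihu => intro c d h; simp only [lift]; rw [iht _ _ h, ihu _ _ h]

theorem lift_subst_hi (t : Term) : ∀ u c k, k ≤ c →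
    lift c (subst t k u) = subst (lift (c+1) t) k (lift c u) := by
  induction t with
  | var n =>
    intro u c k h; simp only [subst, lift]
    split_ifs <;> simp_all [lift, subst] <;> (try split_ifs) <;> first | rfl | omega | (exfalso; omega)
  | lam t ih =>
    intro u c k h; simp only [subst, lift]
    rw [ih _ _ _ (by omega), lift_lift u 0 c (by omega)]
  | app t v iht ihv => intro u c k h; simp only [subst, lift]; rw [iht _ _ _ h, ihv _ _ _ h]

theorem lift_subst_lo (t : Term) : ∀ u c k, c ≤ k →
    lift c (subst t k u) = subst (lift c t) (k+1) (lift c u) := by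
  induction t with
  | var n =>
    intro u c k h; simp only [subst, lift]
    split_ifs <;> simp_all [lift, subst] <;> (try split_ifs) <;> first | rfl | omega | (exfalso; omega)
  | lam t ih =>
    intro u c k h; simp only [subst, lift]
    rw [ih _ _ _ (by omega), lift_lift u 0 c (by omega)]
  | app t v iht ihv => intro u c k h; simp only [subst, lift]; rw [iht _ _ _ h, ihv _ _ _ h]

theorem subst_lift (t : Term) : ∀ u k, subst (lift k t) k u = t := by
  induction t with
  | var n => intro u k; simp only [lift, subst]; split_ifs <;> simp_all <;> (try split_ifs) <;> first | rfl | omega | (exfalso; omega)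
  | lam t ih => intro u k; simp only [lift, subst]; rw [ih]
  | app t v iht ihv => intro u k; simp only [lift, subst]; rw [iht, ihv]

theorem subst_subst (t : Term) : ∀ s u i j, i ≤ j →
    subst (subst t i s) j u = subst (subst t (j+1) (lift i u)) i (subst s j u) := by
  induction t with
  | var n =>
    intro s u i j h; simp only [subst]
    split_ifs <;> simp_all [subst, lift, subst_lift] <;> (try split_ifs) <;> first | rfl | omega | (exfalso; omega)
  | lam t ih =>
    intro s u i j h; simp only [subst]
    rw [ih _ _ _ _ (by omega), lift_lift u 0 i (by omega), lift_subst_lo s u 0 j (by omega)]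
  | app t v iht ihv => intro s u i j h; simp only [subst]; rw [iht _ _ _ _ h, ihv _ _ _ _ h]

theorem swap_lift_hi (t : Term) : ∀ c d, d + 1 < c →
    swap d (lift c t) = lift c (swap d t) := by
  induction t with
  | var n => intro c d h; simp only [lift, swap]; split_ifs <;> simp_all [lift, swap] <;> (try split_ifs) <;> first | rfl | omega | (exfalso; omega)
  | lam t ih => intro c d h; simp only [lift, swap]; rw [ih _ _ (by omega)]
  | app t u iht ihu => intro c d h; simp only [lift, swap]; rw [iht _ _ h, ihu _ _ h]

theorem swap_lift_lo (t : Term) : ∀ c d, c ≤ d →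
    swap (d+1) (lift c t) = lift c (swap d t) := by
  induction t with
  | var n => intro c d h; simp only [lift, swap]; split_ifs <;> first | rfl | (simp only [Term.var.injEq]; omega) | (exfalso; omega)
  | lam t ih => intro c d h; simp only [lift, swap]; rw [ih _ _ (by omega)]
  | app t u iht ihu => intro c d h; simp only [lift, swap]; rw [iht _ _ h, ihu _ _ h]

theorem swap_lift_lift (t : Term) : ∀ d, swap d (lift d (lift d t)) = lift d (lift d t) := by
  induction t with
  | var n => intro d; simp only [lift, swap]; split_ifs <;> simp_all <;> (try split_ifs) <;> first | rfl | omega | (exfalso; omega)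
  | lam t ih => intro d; simp only [lift, swap]; rw [ih]
  | app t u iht ihu => intro d; simp only [lift, swap]; rw [iht, ihu]

theorem swap_subst (t : Term) : ∀ u d k, d + 1 < k →
    swap d (subst t k u) = subst (swap d t) k (swap d u) := by
  induction t with
  | var n =>
    intro u d k h; simp only [subst, swap]
    split_ifs <;> simp_all [subst, swap] <;> (try split_ifs) <;> first | rfl | omega | (exfalso; omega)
  | lam t ih =>
    intro u d k h; simp only [subst, swap]
    rw [ih _ _ _ (by omega), swap_lift_lo u 0 d (by omega)]
  | app t v iht ihv => intro u d k h; simp only [subst, swap]; rw [iht _ _ _ h, ihv _ _ _ h]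

end Term
open Term in
theorem step_lift {r : Rule} {t t' : Term} (h : Step r t t') :
    ∀ c, Step r (lift c t) (lift c t') := by
  induction h with
  | beta M N =>
    intro c; simp only [lift]
    rw [lift_subst_hi M N c 0 (by omega)]
    exact Step.beta _ _
  | delta M N =>
    intro c; simp only [lift]
    rw [← swap_lift_hi M (c+2) 0 (by omega), ← lift_lift N 0 c (by omega)]
    exact Step.delta _ _
  | gamma M N P =>
    intro c; simp only [lift]
    rw [← lift_lift P 0 c (by omega)]
    exact Step.gamma _ _ _
  | assoc M N P =>
    intro c; simp only [lift]
    rw [← lift_lift M 0 c (by omega)]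
    exact Step.assoc _ _ _
  | appCongL u _ ih => intro c; exact Step.appCongL _ (ih c)
  | appCongR t _ ih => intro c; exact Step.appCongR _ (ih c)
  | lamCong _ ih => intro c; exact Step.lamCong (ih (c+1))

open Term in
theorem step_subst {r : Rule} {t t' : Term} (h : Step r t t') :
    ∀ k u, Step r (subst t k u) (subst t' k u) := by
  induction h with
  | beta M N =>
    intro k u; simp only [subst]
    rw [subst_subst M N u 0 k (by omega)]
    exact Step.beta _ _
  | delta M N =>
    intro k u; simp only [subst]
    rw [← swap_lift_lift u 0]
    rw [← swap_subst M (lift 0 (lift 0 u)) 0 (k+2) (by omega)]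
    rw [swap_lift_lift u 0]
    rw [← lift_subst_lo N u 0 k (by omega)]
    exact Step.delta _ _
  | gamma M N P =>
    intro k u; simp only [subst]
    rw [← lift_subst_lo P u 0 k (by omega)]
    exact Step.gamma _ _ _
  | assoc M N P =>
    intro k u; simp only [subst]
    rw [← lift_subst_lo M u 0 k (by omega)]
    exact Step.assoc _ _ _
  | appCongL u _ ih => intro k v; exact Step.appCongL _ (ih k v)
  | appCongR t _ ih => intro k v; exact Step.appCongR _ (ih k v)
  | lamCong _ ih => intro k v; exact Step.lamCong (ih (k+1) (Term.lift 0 v))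

theorem rtg_lam {a b : Term} (h : Relation.ReflTransGen StepAll a b) :
    Relation.ReflTransGen StepAll (.lam a) (.lam b) := by
  induction h with
  | refl => exact .refl
  | tail _ h2 ih => exact ih.tail ⟨h2.choose, Step.lamCong h2.choose_spec⟩

theorem rtg_app {a a' b b' : Term} (h1 : Relation.ReflTransGen StepAll a a')
    (h2 : Relation.ReflTransGen StepAll b b') :
    Relation.ReflTransGen StepAll (.app a b) (.app a' b') := by
  have s1 : Relation.ReflTransGen StepAll (Term.app a b) (.app a' b) := by
    induction h1 with
    | refl => exact .refl
    | tail _ h ih => exact ih.tail ⟨h.choose, Step.appCongL _ h.choose_spec⟩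
  refine s1.trans ?_
  induction h2 with
  | refl => exact .refl
  | tail _ h ih => exact ih.tail ⟨h.choose, Step.appCongR _ h.choose_spec⟩

open Term in
theorem step_substArg : ∀ (t : Term) {r u u'}, Step r u u' → ∀ k,
    Relation.ReflTransGen StepAll (subst t k u) (subst t k u') := by
  intro t
  induction t with
  | var n =>
    intro r u u' h k; simp only [subst]
    split
    · exact .single ⟨r, h⟩
    · exact .refl
  | lam t ih =>
    intro r u u' h k; simp only [subst]
    exact rtg_lam (ih (step_lift h 0) (k+1))
  | app a b iha ihb =>
    intro r u u' h k; simp only [subst]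
    exact rtg_app (iha h k) (ihb h k)

theorem sn_of_step {t t' : Term} (h : SN t) (hs : StepAll t t') : SN t' := h.inv hs

theorem sn_of_rtg {t t' : Term} (h : SN t) (hs : Relation.ReflTransGen StepAll t t') : SN t' := by
  induction hs with
  | refl => exact h
  | tail _ h2 ih => exact ih.inv h2

theorem sn_app_left : ∀ {t : Term}, SN t → ∀ {a b : Term}, t = .app a b → SN a := by
  intro t h
  induction h with
  | intro t _ ih =>
    rintro a b rfl
    constructor; rintro a' ⟨r, hr⟩
    exact ih (Term.app a' b) ⟨r, Step.appCongL b hr⟩ rfl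

theorem sn_app_right : ∀ {t : Term}, SN t → ∀ {a b : Term}, t = .app a b → SN b := by
  intro t h
  induction h with
  | intro t _ ih =>
    rintro a b rfl
    constructor; rintro b' ⟨r, hr⟩
    exact ih (Term.app a b') ⟨r, Step.appCongR a hr⟩ rfl

theorem sn_lam_body : ∀ {t : Term}, SN t → ∀ {a : Term}, t = .lam a → SN a := by
  intro t h
  induction h with
  | intro t _ ih =>
    rintro a rfl
    constructor; rintro a' ⟨r, hr⟩
    exact ih (Term.lam a') ⟨r, Step.lamCong hr⟩ rfl
/-- Immediate subterm relation: `ImmSub a b` iff `a` is an immediate subterm of `b`. -/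
def ImmSub (a b : Term) : Prop := (∃ c, b = .app a c) ∨ (∃ c, b = .app c a) ∨ b = .lam a

/-- Union of inverse step and immediate subterm. -/
def Qrel (a b : Term) : Prop := StepAll b a ∨ ImmSub a b

theorem acc_Q_aux : ∀ t : Term, (∀ t', StepAll t t' → Acc Qrel t') → SN t → Acc Qrel t := by
  intro t
  induction t with
  | var n =>
    intro h _
    constructor; rintro p (hs | hsub)
    · exact h p hs
    · rcases hsub with ⟨c, hc⟩ | ⟨c, hc⟩ | hc <;> cases hc
  | lam a ih =>
    intro h hsn
    constructor; rintro p (hs | hsub)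
    · exact h p hs
    · rcases hsub with ⟨c, hc⟩ | ⟨c, hc⟩ | hc
      · cases hc
      · cases hc
      · cases hc
        refine ih (fun a' ha' => ?_) (sn_lam_body hsn rfl)
        have := h (.lam a') ⟨ha'.choose, Step.lamCong ha'.choose_spec⟩
        exact this.inv (Or.inr (Or.inr (Or.inr rfl)))
  | app a b iha ihb =>
    intro h hsn
    constructor; rintro p (hs | hsub)
    · exact h p hs
    · rcases hsub with ⟨c, hc⟩ | ⟨c, hc⟩ | hc
      · cases hc
        refine iha (fun a' ha' => ?_) (sn_app_left hsn rfl)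
        have := h (.app a' b) ⟨ha'.choose, Step.appCongL _ ha'.choose_spec⟩
        exact this.inv (Or.inr (Or.inl ⟨b, rfl⟩))
      · cases hc
        refine ihb (fun b' hb' => ?_) (sn_app_right hsn rfl)
        have := h (.app a b') ⟨hb'.choose, Step.appCongR _ hb'.choose_spec⟩
        exact this.inv (Or.inr (Or.inr (Or.inl ⟨a, rfl⟩)))
      · cases hc

theorem acc_Q (t : Term) (h : SN t) : Acc Qrel t := by
  induction h with
  | intro t hSN ih => exact acc_Q_aux t (fun t' hs => ih t' hs) (Acc.intro t hSN)

/-- Transitive closure of step-or-subterm, as a "smaller than" order. -/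
def Elt : Term → Term → Prop := Relation.TransGen Qrel

theorem sn_acc_elt {t : Term} (h : SN t) : Acc Elt t := (acc_Q t h).transGen

/-- Restriction making `Elt` globally well-founded. -/
def Elt' (a b : Term) : Prop := Elt a b ∧ Acc Elt a

theorem acc_elt'_of (t : Term) (h : Acc Elt t) : Acc Elt' t := by
  induction h with
  | intro t _ ih => exact ⟨t, fun y hy => ih y hy.1⟩

theorem acc_elt' (t : Term) : Acc Elt' t := ⟨t, fun y hy => acc_elt'_of y hy.2⟩

theorem elt_of_steps {a b : Term} (h : Relation.TransGen StepAll a b) : Elt b a := by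
  induction h with
  | single h => exact .single (Or.inl h)
  | tail _ h2 ih => exact Relation.TransGen.head (Or.inl h2) ih

theorem elt'_of_steps {a b : Term} (h : Relation.TransGen StepAll a b) (hb : SN b) :
    Elt' b a := ⟨elt_of_steps h, sn_acc_elt hb⟩
/-- One step of the Dershowitz–Manna multiset order (w.r.t. `Elt'`):
replace one element by finitely many smaller ones. -/
def MOne (n m : Multiset Term) : Prop :=
  ∃ a m₀ s, m = a ::ₘ m₀ ∧ n = s + m₀ ∧ ∀ y ∈ s, Elt' y a

/-- The multiset order. -/
def MLt : Multiset Term → Multiset Term → Prop := Relation.TransGen MOne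

theorem acc_mone_cons : ∀ a : Term, Acc Elt' a →
    ∀ m : Multiset Term, Acc MOne m → Acc MOne (a ::ₘ m) := by
  intro a ha
  induction ha with
  | intro a _ iha =>
    intro m hm
    induction hm with
    | intro m hm ihm =>
      constructor
      rintro n ⟨b, m₀, s, heq, rfl, hs⟩
      rcases Multiset.cons_eq_cons.mp heq with ⟨rfl, rfl⟩ | ⟨_, cs, h1, h2⟩
      · have key : ∀ s' : Multiset Term, (∀ y ∈ s', Elt' y a) → Acc MOne (s' + m) := by
          intro s'
          induction s' using Multiset.induction with
          | empty => intro _; simpa using Acc.intro m hm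
          | cons y s'' ih =>
            intro hy
            rw [Multiset.cons_add]
            exact iha y (hy y (Multiset.mem_cons_self _ _)) _
              (ih (fun z hz => hy z (Multiset.mem_cons_of_mem hz)))
        exact key s hs
      · have hmo : MOne (s + cs) m := ⟨b, cs, s, h1, rfl, hs⟩
        have := ihm (s + cs) hmo
        rw [h2, Multiset.add_cons]
        exact this
  
theorem acc_mone (m : Multiset Term) : Acc MOne m := by
  induction m using Multiset.induction with
  | empty =>
    constructor; rintro n ⟨a, m₀, s, heq, _, _⟩
    exact absurd heq.symm (Multiset.cons_ne_zero)
  | cons a m ih => exact acc_mone_cons a (acc_elt' a) m ih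

theorem acc_mlt (m : Multiset Term) : Acc MLt m := (acc_mone m).transGen

theorem mone_cons {m n : Multiset Term} (h : MOne m n) (a : Term) :
    MOne (a ::ₘ m) (a ::ₘ n) := by
  obtain ⟨b, m₀, s, rfl, rfl, hs⟩ := h
  exact ⟨b, a ::ₘ m₀, s, Multiset.cons_swap a b m₀, by rw [Multiset.add_cons], hs⟩

theorem mlt_cons {m n : Multiset Term} (h : MLt m n) (a : Term) :
    MLt (a ::ₘ m) (a ::ₘ n) := by
  induction h with
  | single h => exact .single (mone_cons h a)
  | tail _ h2 ih => exact ih.tail (mone_cons h2 a)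

theorem mlt_master {m₁ m₂ : Multiset Term}
    (hrel : Multiset.Rel (Relation.ReflTransGen StepAll) m₁ m₂)
    {a : Term} {s : Multiset Term}
    (hm₁ : ∀ x ∈ m₁, SN x) (ha : SN a)
    (hs : ∀ y ∈ s, Elt y a ∧ SN y) : MLt (s + m₂) (a ::ₘ m₁) := by
  induction hrel with
  | zero =>
    refine .single ⟨a, 0, s, by simp, by simp, fun y hy => ⟨(hs y hy).1, sn_acc_elt (hs y hy).2⟩⟩
  | @cons x y m₁' m₂' hxy hrel ih =>
    have ih' : MLt (s + m₂') (a ::ₘ m₁') :=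
      ih (fun z hz => hm₁ z (Multiset.mem_cons_of_mem hz))
    have step1 : MLt (x ::ₘ (s + m₂')) (x ::ₘ (a ::ₘ m₁')) := mlt_cons ih' x
    have hgoal : MLt (y ::ₘ (s + m₂')) (x ::ₘ (a ::ₘ m₁')) := by
      rcases Relation.reflTransGen_iff_eq_or_transGen.mp hxy with rfl | htg
      · exact step1
      · have hyx : Elt' y x :=
          elt'_of_steps htg (sn_of_rtg (hm₁ x (Multiset.mem_cons_self _ _)) hxy)
        have step2 : MOne (y ::ₘ (s + m₂')) (x ::ₘ (s + m₂')) :=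
          ⟨x, s + m₂', {y}, rfl, by simp [Multiset.singleton_add], by
            intro z hz; rw [Multiset.mem_singleton] at hz; subst hz; exact hyx⟩
        exact (Relation.TransGen.single step2).trans step1
    rw [Multiset.add_cons]
    rwa [Multiset.cons_swap] at hgoal

theorem rel_rtg_refl (m : Multiset Term) : Multiset.Rel (Relation.ReflTransGen StepAll) m m := by
  induction m using Multiset.induction with
  | empty => exact .zero
  | cons a m ih => exact .cons .refl ih
/-- Composition of a closing substitution with substituting `M` for the innermost binder. -/
def liftF (ρ : Term → Term) (M : Term) : Term → Term := fun s => ρ (Term.subst s 0 M)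

/-- `GoodSub ρ`: ρ acts like a substitution. -/
def GoodSub (ρ : Term → Term) : Prop :=
  (∀ r a b, Step r a b → Step r (ρ a) (ρ b)) ∧ (∀ a b, ρ (.app a b) = .app (ρ a) (ρ b))

theorem goodSub_id : GoodSub id := ⟨fun _ _ _ h => h, fun _ _ => rfl⟩

theorem goodSub_liftF {ρ} (h : GoodSub ρ) (M : Term) : GoodSub (liftF ρ M) :=
  ⟨fun r a b hs => h.1 r _ _ (step_subst hs 0 M), fun a b => h.2 _ _⟩

theorem rtg_map {ρ} (hρ : GoodSub ρ) {a b} (h : Relation.ReflTransGen StepAll a b) :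
    Relation.ReflTransGen StepAll (ρ a) (ρ b) := by
  induction h with
  | refl => exact .refl
  | tail _ h2 ih => exact ih.tail ⟨h2.choose, hρ.1 _ _ _ h2.choose_spec⟩

/-- The invariant: `SpineInv d ρ t m ν ℓ` means `t` is a spine `(H M₁ … Mₙ)` whose
head is a variable ≥ d, possibly interleaved with pending β-redex abstractions;
`ρ` is the substitution closing `t`, `m` the multiset of closed arguments,
`ν` a weight decreasing under γ and `ℓ` the number of spine-lambdas. -/
inductive SpineInv : ℕ → (Term → Term) → Term → Multiset Term → ℕ → ℕ → Prop
  | var {d ρ x} : d ≤ x → SpineInv d ρ (.var x) 0 0 0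
  | app {d ρ u M m ν ℓ} : SpineInv d ρ u m ν ℓ → SN (ρ M) →
      SpineInv d ρ (.app u M) (ρ M ::ₘ m) (ν + ℓ) ℓ
  | lamApp {d ρ g M m ν ℓ} : SpineInv (d+1) (liftF ρ M) g m ν ℓ → SN (ρ M) →
      SpineInv d ρ (.app (.lam g) M) (ρ M ::ₘ m) ν (ℓ+1)

theorem inv_elems_sn {d ρ t m ν ℓ} (h : SpineInv d ρ t m ν ℓ) : ∀ x ∈ m, SN x := by
  induction h with
  | var => intro x hx; simp at hx
  | app _ hM ih =>
    intro x hx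
    rcases Multiset.mem_cons.mp hx with rfl | hx
    · exact hM
    · exact ih x hx
  | lamApp _ hM ih =>
    intro x hx
    rcases Multiset.mem_cons.mp hx with rfl | hx
    · exact hM
    · exact ih x hx

theorem inv_mono {d ρ₁ t m₁ ν ℓ} (h : SpineInv d ρ₁ t m₁ ν ℓ) :
    ∀ ρ₂, (∀ s, Relation.ReflTransGen StepAll (ρ₁ s) (ρ₂ s)) →
    ∃ m₂, SpineInv d ρ₂ t m₂ ν ℓ ∧ Multiset.Rel (Relation.ReflTransGen StepAll) m₁ m₂ := by
  induction h with
  | var hx => intro ρ₂ _; exact ⟨0, .var hx, .zero⟩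
  | @app d ρ u M m ν ℓ _ hM ih =>
    intro ρ₂ hr
    obtain ⟨m₂, hI, hrel⟩ := ih ρ₂ hr
    exact ⟨ρ₂ M ::ₘ m₂, .app hI (sn_of_rtg hM (hr M)), .cons (hr M) hrel⟩
  | @lamApp d ρ g M m ν ℓ _ hM ih =>
    intro ρ₂ hr
    obtain ⟨m₂, hI, hrel⟩ := ih (liftF ρ₂ M) (fun s => hr (Term.subst s 0 M))
    exact ⟨ρ₂ M ::ₘ m₂, .lamApp hI (sn_of_rtg hM (hr M)), .cons (hr M) hrel⟩

open Term in
theorem inv_lift {d ρ t m ν ℓ} (h : SpineInv d ρ t m ν ℓ) :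
    ∀ c, c ≤ d → ∀ ρ', (∀ s, Relation.ReflTransGen StepAll (ρ s) (ρ' (lift c s))) →
    ∃ m', SpineInv (d+1) ρ' (lift c t) m' ν ℓ ∧ Multiset.Rel (Relation.ReflTransGen StepAll) m m' := by
  induction h with
  | @var d ρ x hx =>
    intro c hc ρ' _
    refine ⟨0, ?_, .zero⟩
    simp only [lift]
    rw [if_neg (by omega)]
    exact .var (by omega)
  | @app d ρ u M m ν ℓ _ hM ih =>
    intro c hc ρ' hr
    obtain ⟨m', hI, hrel⟩ := ih c hc ρ' hr
    exact ⟨ρ' (lift c M) ::ₘ m', .app hI (sn_of_rtg hM (hr M)), .cons (hr M) hrel⟩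
  | @lamApp d ρ g M m ν ℓ _ hM ih =>
    intro c hc ρ' hr
    have hr' : ∀ s, Relation.ReflTransGen StepAll ((liftF ρ M) s)
        ((liftF ρ' (lift c M)) (lift (c+1) s)) := by
      intro s
      show Relation.ReflTransGen StepAll (ρ (subst s 0 M)) (ρ' (subst (lift (c+1) s) 0 (lift c M)))
      rw [← lift_subst_hi s M c 0 (by omega)]
      exact hr (subst s 0 M)
    obtain ⟨m', hI, hrel⟩ := ih (c+1) (by omega) (liftF ρ' (lift c M)) hr'
    refine ⟨ρ' (lift c M) ::ₘ m', ?_, .cons (hr M) hrel⟩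
    simp only [lift]
    exact .lamApp hI (sn_of_rtg hM (hr M))

open Term in
theorem inv_subst {d ρ' t m ν ℓ} (h : SpineInv d ρ' t m ν ℓ) :
    ∀ e j M ρ, d = e + 1 → j ≤ e → (∀ s, ρ' s = ρ (Term.subst s j M)) →
    SpineInv e ρ (Term.subst t j M) m ν ℓ := by
  induction h with
  | @var d ρ' x hx =>
    intro e j M ρ hd hj hρ; subst hd
    simp only [subst]
    rw [if_neg (by omega), if_neg (by omega)]
    exact .var (by omega)
  | @app d ρ' u M0 m ν ℓ _ hM ih =>
    intro e j M ρ hd hj hρ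
    have hel : ρ' M0 = ρ (subst M0 j M) := hρ M0
    rw [hel] at hM
    have := SpineInv.app (ih e j M ρ hd hj hρ) hM
    simp only [subst]
    rwa [← hel] at this
  | @lamApp d ρ' g M0 m ν ℓ _ hM ih =>
    intro e j M ρ hd hj hρ; subst hd
    have hel : ρ' M0 = ρ (subst M0 j M) := hρ M0
    rw [hel] at hM
    have hcond : ∀ s, (liftF ρ' M0) s =
        (liftF ρ (subst M0 j M)) (subst s (j+1) (lift 0 M)) := by
      intro s
      show ρ' (subst s 0 M0) = ρ (subst (subst s (j+1) (lift 0 M)) 0 (subst M0 j M))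
      rw [hρ (subst s 0 M0), subst_subst s M0 M 0 j (by omega)]
    have hinner := ih (e+1) (j+1) (lift 0 M) (liftF ρ (subst M0 j M)) rfl (by omega) hcond
    have := SpineInv.lamApp hinner hM
    simp only [subst]
    rwa [← hel] at this
open Term in
theorem spineInv_lamApp_inv {d ρ Q R m ν ℓ} (h : SpineInv d ρ (.app (.lam Q) R) m ν ℓ) :
    ∃ mQ ℓQ, SpineInv (d+1) (liftF ρ R) Q mQ ν ℓQ ∧ SN (ρ R) ∧
      m = ρ R ::ₘ mQ ∧ ℓ = ℓQ + 1 := by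
  cases h with
  | app h1 _ => cases h1
  | lamApp hg hR => exact ⟨_, _, hg, hR, rfl, rfl⟩

open Term in
theorem inv_step {d ρ t m ν ℓ} (hI : SpineInv d ρ t m ν ℓ) :
    ∀ {r t'}, Step r t t' → GoodSub ρ →
    ∃ m' ν' ℓ', SpineInv d ρ t' m' ν' ℓ' ∧
      (MLt m' m ∨ (m' = m ∧ ν' < ν ∧ ℓ' = ℓ)) := by
  induction hI with
  | var hx => intro r t' hs _; cases hs
  | @app d ρ u M0 mu νu ℓu hu hM ihu =>
    intro r t' hs hρ
    cases hs with
    | beta B N => cases hu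
    | delta B N => cases hu
    | gamma Q R S =>
      obtain ⟨mQ, ℓQ, hg, hR, rfl, rfl⟩ := spineInv_lamApp_inv hu
      have key : liftF ρ R (lift 0 M0) = ρ M0 := by
        show ρ (subst (lift 0 M0) 0 R) = ρ M0
        rw [subst_lift]
      have hSS : SN (liftF ρ R (lift 0 M0)) := by rw [key]; exact hM
      refine ⟨ρ R ::ₘ (liftF ρ R (lift 0 M0) ::ₘ mQ), νu + ℓQ, ℓQ + 1,
        SpineInv.lamApp (SpineInv.app hg hSS) hR, Or.inr ⟨?_, by omega, rfl⟩⟩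
      rw [key, Multiset.cons_swap]
    | assoc A N P =>
      -- M0 = .app (.lam N) P ; t = .app u M0 ; t' = .app (.lam (.app (lift 0 A) N)) P
      have hstep : Step .beta (Term.app (.lam N) P) (subst N 0 P) := Step.beta N P
      have hNP : SN (ρ (subst N 0 P)) := sn_of_step hM ⟨.beta, hρ.1 _ _ _ hstep⟩
      have hP : SN (ρ P) := sn_app_right hM (hρ.2 _ _)
      obtain ⟨mu', hlift, hrel⟩ := inv_lift hu 0 (by omega) (liftF ρ P) (fun s => by
        show Relation.ReflTransGen StepAll (ρ s) (ρ (subst (lift 0 s) 0 P))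
        rw [subst_lift])
      have hNsn : SN (liftF ρ P N) := hNP
      have outer := SpineInv.lamApp (SpineInv.app hlift hNsn) hP
      refine ⟨_, _, _, outer, Or.inl ?_⟩
      have hmm : (ρ P ::ₘ {ρ (subst N 0 P)} : Multiset Term) + mu'
          = ρ P ::ₘ (liftF ρ P N ::ₘ mu') := by
        rw [Multiset.cons_add, Multiset.singleton_add]; rfl
      have := mlt_master hrel (inv_elems_sn hu) hM
        (s := ρ P ::ₘ {ρ (subst N 0 P)}) (fun y hy => by
          rcases Multiset.mem_cons.mp hy with rfl | hy
          · exact ⟨.single (Or.inr (Or.inr (Or.inl ⟨ρ (.lam N), hρ.2 _ _⟩))), hP⟩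
          · rw [Multiset.mem_singleton] at hy; subst hy
            exact ⟨.single (Or.inl ⟨.beta, hρ.1 _ _ _ hstep⟩), hNP⟩)
      rwa [hmm] at this
    | appCongL _ hst =>
      obtain ⟨mu', νu', ℓu', hI', hdec⟩ := ihu hst hρ
      refine ⟨_, _, _, SpineInv.app hI' hM, ?_⟩
      rcases hdec with hlt | ⟨rfl, hν, rfl⟩
      · exact Or.inl (mlt_cons hlt _)
      · exact Or.inr ⟨rfl, by omega, rfl⟩
    | @appCongR _ _ M0' _ hst =>
      have hM' : SN (ρ M0') := sn_of_step hM ⟨_, hρ.1 _ _ _ hst⟩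
      refine ⟨_, _, _, SpineInv.app hu hM', Or.inl ?_⟩
      have := mlt_master (rel_rtg_refl mu) (inv_elems_sn hu) hM
        (s := {ρ M0'}) (fun y hy => by
          rw [Multiset.mem_singleton] at hy; subst hy
          exact ⟨.single (Or.inl ⟨_, hρ.1 _ _ _ hst⟩), hM'⟩)
      rwa [Multiset.singleton_add] at this
  | @lamApp d ρ g M0 mg νg ℓg hg hM ihg =>
    intro r t' hs hρ
    cases hs with
    | beta B N =>
      have hI' := inv_subst hg d 0 M0 ρ rfl (by omega) (fun s => rfl)
      refine ⟨mg, νg, ℓg, hI', Or.inl ?_⟩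
      have := mlt_master (rel_rtg_refl mg) (inv_elems_sn hg) hM
        (s := 0) (fun y hy => by simp at hy)
      rwa [zero_add] at this
    | delta B N => cases hg
    | assoc A N P =>
      -- M0 = .app (.lam N) P ; t' = .app (.lam (.app (lift 0 (.lam g)) N)) P
      have hstep : Step .beta (Term.app (.lam N) P) (subst N 0 P) := Step.beta N P
      have hNP : SN (ρ (subst N 0 P)) := sn_of_step hM ⟨.beta, hρ.1 _ _ _ hstep⟩
      have hP : SN (ρ P) := sn_app_right hM (hρ.2 _ _)
      have hcond : ∀ s, Relation.ReflTransGen StepAll ((liftF ρ (Term.app (.lam N) P)) s)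
          ((liftF (liftF ρ P) N) (lift 1 s)) := by
        intro s
        show Relation.ReflTransGen StepAll (ρ (subst s 0 (Term.app (.lam N) P)))
            (ρ (subst (subst (lift 1 s) 0 N) 0 P))
        have he : subst (subst (lift 1 s) 0 N) 0 P = subst s 0 (subst N 0 P) := by
          rw [subst_subst (lift 1 s) N P 0 0 (le_refl 0), subst_lift]
        rw [he]
        exact rtg_map hρ (step_substArg s hstep 0)
      obtain ⟨m₂, hI2, hrel⟩ := inv_lift hg 1 (by omega) (liftF (liftF ρ P) N) hcond
      have hNsn : SN (liftF ρ P N) := hNP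
      have outer := SpineInv.lamApp (SpineInv.lamApp hI2 hNsn) hP
      refine ⟨ρ P ::ₘ (liftF ρ P N ::ₘ m₂), νg, ℓg + 1 + 1, ?_, Or.inl ?_⟩
      · show SpineInv d ρ (Term.app (.lam (.app (lift 0 (.lam g)) N)) P) _ _ _
        simp only [lift, Nat.zero_add]
        exact outer
      · have hmm : (ρ P ::ₘ {ρ (subst N 0 P)} : Multiset Term) + m₂
            = ρ P ::ₘ (liftF ρ P N ::ₘ m₂) := by
          rw [Multiset.cons_add, Multiset.singleton_add]; rfl
        have := mlt_master hrel (inv_elems_sn hg) hM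
          (s := ρ P ::ₘ {ρ (subst N 0 P)}) (fun y hy => by
            rcases Multiset.mem_cons.mp hy with rfl | hy
            · exact ⟨.single (Or.inr (Or.inr (Or.inl ⟨ρ (.lam N), hρ.2 _ _⟩))), hP⟩
            · rw [Multiset.mem_singleton] at hy; subst hy
              exact ⟨.single (Or.inl ⟨.beta, hρ.1 _ _ _ hstep⟩), hNP⟩)
        rwa [hmm] at this
    | appCongL _ hst =>
      cases hst with
      | lamCong hg' =>
        obtain ⟨mg', νg', ℓg', hI', hdec⟩ := ihg hg' (goodSub_liftF hρ M0)
        refine ⟨_, _, _, SpineInv.lamApp hI' hM, ?_⟩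
        rcases hdec with hlt | ⟨rfl, hν, rfl⟩
        · exact Or.inl (mlt_cons hlt _)
        · exact Or.inr ⟨rfl, hν, rfl⟩
    | @appCongR _ _ M0' _ hst =>
      have hM' : SN (ρ M0') := sn_of_step hM ⟨_, hρ.1 _ _ _ hst⟩
      obtain ⟨m₂, hI2, hrel⟩ := inv_mono hg (liftF ρ M0')
        (fun s => rtg_map hρ (step_substArg s hst 0))
      refine ⟨_, _, _, SpineInv.lamApp hI2 hM', Or.inl ?_⟩
      have := mlt_master hrel (inv_elems_sn hg) hM
        (s := {ρ M0'}) (fun y hy => by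
          rw [Multiset.mem_singleton] at hy; subst hy
          exact ⟨.single (Or.inl ⟨_, hρ.1 _ _ _ hst⟩), hM'⟩)
      rwa [Multiset.singleton_add] at this
theorem inv_sn : ∀ m : Multiset Term, ∀ ν t d ρ ℓ, GoodSub ρ →
    SpineInv d ρ t m ν ℓ → SN t := by
  intro m
  induction acc_mlt m with
  | intro m _ ihm =>
    intro ν
    induction ν using Nat.strong_induction_on with
    | _ ν ihν =>
      intro t d ρ ℓ hρ hI
      constructor
      rintro t' ⟨r, hs⟩
      obtain ⟨m', ν', ℓ', hI', hdec⟩ := inv_step hI hs hρ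
      rcases hdec with hlt | ⟨rfl, hν, -⟩
      · exact ihm m' hlt ν' t' d ρ ℓ' hρ hI'
      · exact ihν ν' hν t' d ρ ℓ' hρ hI'

theorem inv_appList {d ρ} (hρ : GoodSub ρ) : ∀ (Ms : List Term) (H : Term) m ν ℓ,
    SpineInv d ρ H m ν ℓ → (∀ M ∈ Ms, SN (ρ M)) →
    ∃ m' ν' ℓ', SpineInv d ρ (appList H Ms) m' ν' ℓ' := by
  intro Ms
  induction Ms with
  | nil => exact fun H m ν ℓ h _ => ⟨m, ν, ℓ, h⟩
  | cons M Ms ih =>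
    intro H m ν ℓ h hSN
    exact ih (.app H M) _ _ _ (SpineInv.app h (hSN M (by simp)))
      (fun M' hM' => hSN M' (by simp [hM']))

theorem sn_var_appList (x : ℕ) (Ms : List Term) (hSN : ∀ M ∈ Ms, SN M) :
    SN (appList (.var x) Ms) := by
  obtain ⟨m, ν, ℓ, hI⟩ := inv_appList goodSub_id Ms (.var x) 0 0 0
    (SpineInv.var (Nat.zero_le x)) (fun M hM => hSN M hM)
  exact inv_sn m ν _ 0 id ℓ goodSub_id hI

/-- A term (H M₁ ... Mₙ) with H a variable or abstraction, H and all Mᵢ SN,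
which is not head reducible for δ, γ, β and whose arguments are not β-redexes,
is SN; in particular (x M₁ ... Mₙ) is SN whenever all Mᵢ are SN and no Mᵢ is
a β-redex. -/
theorem sn_no_head_redex :
    (∀ (H : Term) (Ms : List Term),
      ((∃ n, H = .var n) ∨ (∃ N, H = .lam N)) →
      SN H → (∀ M ∈ Ms, SN M) →
      (∀ N, Ms ≠ [] → H ≠ .lam (.lam N)) →
      (2 ≤ Ms.length → ∀ N, H ≠ .lam N) →
      (Ms ≠ [] → ∀ N, H ≠ .lam N) →
      (∀ M ∈ Ms, ∀ N P, M ≠ .app (.lam N) P) →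
      SN (appList H Ms)) ∧
    (∀ (x : ℕ) (Ms : List Term),
      (∀ M ∈ Ms, SN M) → (∀ M ∈ Ms, ∀ N P, M ≠ .app (.lam N) P) →
      SN (appList (.var x) Ms)) := by
  constructor
  · intro H Ms hshape hH hMs _ _ h5 _
    rcases Ms with _ | ⟨M, Ms'⟩
    · exact hH
    · rcases hshape with ⟨x, rfl⟩ | ⟨N, rfl⟩
      · exact sn_var_appList x _ hMs
      · exact absurd rfl (h5 (by simp) N)
  · intro x Ms hMs _
    exact sn_var_appList x Ms hMs
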